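/- arXiv:0910.0874 — 3 statements merged into one kernel-verified Lean document; each statement's English description precedes it below -/
import Mathlib

section
/- Let G be a topological group acting continuously on a topological space P, and let f : P → X be a proper continuous map which is invariant under the action, i.e. f(g • p) = f(p) for all g ∈ G and p ∈ P. Assume X is Hausdorff and weakly locally compact. Then the induced continuous map f̄ : P/G → X on the orbit space, characterized by f̄ ∘ q = f where q : P → P/G is the quotient projection, is a proper map. -/
theorem Topology.IsQuotientMap.isProperMap_of_comp {P Y X : Type*} [TopologicalSpace P]
    [TopologicalSpace Y] [TopologicalSpace X] {q : P → Y} {g : Y → X}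
    (hq : Topology.IsQuotientMap q) (hgq : IsProperMap (g ∘ q)) : IsProperMap g :=
  isProperMap_of_comp_of_surj hq.continuous (hq.continuous_iff.mpr hgq.continuous) hgq hq.surjective

theorem induced_map_on_orbit_space_isProperMap_general
    {G P X : Type*} [Group G]
    [TopologicalSpace P] [MulAction G P]
    [TopologicalSpace X]
    (f : P → X) (hf : IsProperMap f)
    (fbar : Quotient (MulAction.orbitRel G P) → X)
    (hfbar : ∀ p : P, fbar (Quotient.mk (MulAction.orbitRel G P) p) = f p) :
    IsProperMap fbar := by
  have hcomp : fbar ∘ Quotient.mk (MulAction.orbitRel G P) = f := funext hfbar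
  exact isQuotientMap_quotient_mk'.isProperMap_of_comp (hcomp ▸ hf)

/-- If a proper continuous map `f : P → X` is invariant under a continuous action of a
topological group `G` on `P`, and `X` is Hausdorff and weakly locally compact, then the
induced continuous map `f̄ : P/G → X` on the orbit space (characterized by `f̄ ∘ q = f`,
where `q` is the quotient projection) is proper. -/
theorem induced_map_on_orbit_space_isProperMap
    {G P X : Type*} [Group G] [TopologicalSpace G] [IsTopologicalGroup G]
    [TopologicalSpace P] [MulAction G P] [ContinuousSMul G P]
    [TopologicalSpace X] [T2Space X] [WeaklyLocallyCompactSpace X]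
    (f : P → X) (hf : IsProperMap f)
    (hinv : ∀ (g : G) (p : P), f (g • p) = f p)
    (fbar : Quotient (MulAction.orbitRel G P) → X)
    (hfbar : ∀ p : P, fbar (Quotient.mk (MulAction.orbitRel G P) p) = f p) :
    IsProperMap fbar :=
  induced_map_on_orbit_space_isProperMap_general f hf fbar hfbar
end

section
/- Let Γ : ℝ^m → L(ℝ^m; L(ℝ^m; ℝ^m)) be a smooth Christoffel map, let ρ : ℝⁿ → ℝ^m be smooth, and let U, V : ℝⁿ → ℝⁿ be smooth vector fields on ℝⁿ. For a smooth map W : ℝⁿ → ℝ^m define the ∇-derivative along ρ by (∇̃_u W)(x) := DW(x)·u + Γ(ρ(x))(Dρ(x)·u, W(x)), and the Lie bracket by [U,V](x) := DV(x)·U(x) − DU(x)·V(x). Then for every x ∈ ℝⁿ: ∇̃_{U(x)}(x ↦ Dρ(x)·V(x)) − ∇̃_{V(x)}(x ↦ Dρ(x)·U(x)) − Dρ(x)·[U,V](x) = Γ(ρ(x))(Dρ(x)·U(x), Dρ(x)·V(x)) − Γ(ρ(x))(Dρ(x)·V(x), Dρ(x)·U(x)). That is, the covariant exterior derivative of the first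 jet of ρ equals the pullback by ρ of the torsion tensor: d^∇(j¹ρ) = ρ*T^∇; in particular it vanishes when the connection is torsion free. -/
/-- The covariant exterior derivative of the first jet of `ρ` equals the pullback by `ρ`
of the torsion tensor: `d^∇(j¹ρ) = ρ*T^∇`. Here the covariant derivative on `ℝ^m` is
given by a smooth Christoffel map `Γ`, the `∇`-derivative along `ρ` of a field `W` is
`(∇̃_u W)(x) = DW(x)·u + Γ(ρ(x))(Dρ(x)·u, W(x))`, and `[U,V] = DV·U − DU·V`. -/
theorem covariant_exterior_derivative_jet_eq_torsion_pullback {m n : ℕ}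
    (Γ : (Fin m → ℝ) → ((Fin m → ℝ) →L[ℝ] ((Fin m → ℝ) →L[ℝ] (Fin m → ℝ))))
    (hΓ : ContDiff ℝ (⊤ : ℕ∞) Γ)
    (ρ : (Fin n → ℝ) → (Fin m → ℝ)) (hρ : ContDiff ℝ (⊤ : ℕ∞) ρ)
    (U V : (Fin n → ℝ) → (Fin n → ℝ))
    (hU : ContDiff ℝ (⊤ : ℕ∞) U) (hV : ContDiff ℝ (⊤ : ℕ∞) V) :
    ∀ x : Fin n → ℝ,
      (fderiv ℝ (fun y => fderiv ℝ ρ y (V y)) x (U x)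
          + Γ (ρ x) (fderiv ℝ ρ x (U x)) (fderiv ℝ ρ x (V x)))
        - (fderiv ℝ (fun y => fderiv ℝ ρ y (U y)) x (V x)
          + Γ (ρ x) (fderiv ℝ ρ x (V x)) (fderiv ℝ ρ x (U x)))
        - fderiv ℝ ρ x (fderiv ℝ V x (U x) - fderiv ℝ U x (V x)) =
      Γ (ρ x) (fderiv ℝ ρ x (U x)) (fderiv ℝ ρ x (V x))
        - Γ (ρ x) (fderiv ℝ ρ x (V x)) (fderiv ℝ ρ x (U x)) := by
  intro x
  have hρ' : ContDiff ℝ 1 (fderiv ℝ ρ) := hρ.fderiv_right (by norm_cast)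
  have hc : DifferentiableAt ℝ (fderiv ℝ ρ) x := hρ'.differentiable one_ne_zero x
  have hUd : DifferentiableAt ℝ U x := hU.differentiable (by simp) x
  have hVd : DifferentiableAt ℝ V x := hV.differentiable (by simp) x
  have key : ∀ W : (Fin n → ℝ) → (Fin n → ℝ), DifferentiableAt ℝ W x →
      fderiv ℝ (fun y => fderiv ℝ ρ y (W y)) x =
        (fderiv ℝ ρ x).comp (fderiv ℝ W x) + (fderiv ℝ (fderiv ℝ ρ) x).flip (W x) := by
    intro W hW
    exact fderiv_clm_apply hc hW
  rw [key V hVd, key U hUd]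
  have hsymm : fderiv ℝ (fderiv ℝ ρ) x (U x) (V x) =
      fderiv ℝ (fderiv ℝ ρ) x (V x) (U x) :=
    second_derivative_symmetric (fun y => (hρ.differentiable (by simp) y).hasFDerivAt)
      hc.hasFDerivAt (U x) (V x)
  simp only [ContinuousLinearMap.add_apply, ContinuousLinearMap.comp_apply,
    ContinuousLinearMap.flip_apply, map_sub]
  rw [hsymm]
  abel
end

section
/- Let U ⊆ ℝ^d be open and let ξ_1, …, ξ_d, μ_1, …, μ_d, ν : U → Mₙ(ℝ) be smooth matrix fields. Suppose (advection/Kelvin–Noether hypothesis) ∂_i ν + ξ_i·ν − ν·ξ_i = 0 on U for every i, and suppose the Euler–Poincaré (vertical Lagrange–Poincaré) equation ∑_{i=1}^d (∂_i μ_i + ξ_i·μ_i − μ_i·ξ_i) = 0 holds on U. Then the circulation vector field I = (tr(ν μ_1), …, tr(ν μ_d)) is divergence free: ∑_{i=1}^d ∂_i tr(ν·μ_i) = 0 on U. This is the local (convective, trace-pairing) form of the Kelvin–Noether theorem for the Lagrange–Poincaré field equations. -/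
attribute [local instance] Matrix.normedAddCommGroup Matrix.normedSpace

/-- Product rule for the trace pairing: the derivative of `y ↦ tr (F y * G y)`. -/
theorem fderiv_trace_mul_aux {n d : ℕ} {F G : (Fin d → ℝ) → Matrix (Fin n) (Fin n) ℝ}
    {x : Fin d → ℝ} (hF : DifferentiableAt ℝ F x) (hG : DifferentiableAt ℝ G x)
    (v : Fin d → ℝ) :
    fderiv ℝ (fun y => Matrix.trace (F y * G y)) x v =
      Matrix.trace (fderiv ℝ F x v * G x) + Matrix.trace (F x * fderiv ℝ G x v) := by
  set F' := fderiv ℝ F x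
  set G' := fderiv ℝ G x
  have hFe : ∀ k l : Fin n, HasFDerivAt (fun y => F y k l)
      ((ContinuousLinearMap.proj l).comp ((ContinuousLinearMap.proj k).comp F')) x := by
    intro k l
    exact (ContinuousLinearMap.proj l).hasFDerivAt.comp x
      ((ContinuousLinearMap.proj k).hasFDerivAt.comp x hF.hasFDerivAt)
  have hGe : ∀ k l : Fin n, HasFDerivAt (fun y => G y k l)
      ((ContinuousLinearMap.proj l).comp ((ContinuousLinearMap.proj k).comp G')) x := by
    intro k l
    exact (ContinuousLinearMap.proj l).hasFDerivAt.comp x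
      ((ContinuousLinearMap.proj k).hasFDerivAt.comp x hG.hasFDerivAt)
  have key : HasFDerivAt (fun y => Matrix.trace (F y * G y))
      (∑ k : Fin n, ∑ l : Fin n,
        (F x k l • ((ContinuousLinearMap.proj k).comp ((ContinuousLinearMap.proj l).comp G')) +
         G x l k • ((ContinuousLinearMap.proj l).comp ((ContinuousLinearMap.proj k).comp F')))) x := by
    have : (fun y => Matrix.trace (F y * G y)) =
        fun y => ∑ k : Fin n, ∑ l : Fin n, F y k l * G y l k := by
      funext y
      simp [Matrix.trace, Matrix.diag, Matrix.mul_apply]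
    rw [this]
    exact HasFDerivAt.fun_sum fun k _ => HasFDerivAt.fun_sum fun l _ => (hFe k l).fun_mul (hGe l k)
  rw [key.fderiv]
  simp only [ContinuousLinearMap.sum_apply, ContinuousLinearMap.add_apply,
    ContinuousLinearMap.smul_apply, ContinuousLinearMap.comp_apply,
    ContinuousLinearMap.proj_apply, smul_eq_mul]
  rw [Matrix.trace, Matrix.trace]
  simp only [Matrix.diag, Matrix.mul_apply]
  rw [← Finset.sum_add_distrib]
  refine Finset.sum_congr rfl fun k _ => ?_
  rw [← Finset.sum_add_distrib]
  refine Finset.sum_congr rfl fun l _ => ?_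
  rw [add_comm]; rw [mul_comm (G x l k)]
  rfl

/-- Local (convective, trace-pairing) form of the Kelvin–Noether theorem for the
Lagrange–Poincaré field equations: if `ν` is covariantly advected,
`∂_i ν + [ξ_i, ν] = 0`, and the Euler–Poincaré equation
`∑ᵢ (∂_i μᵢ + [ξᵢ, μᵢ]) = 0` holds, then the circulation vector field
`I = (tr(ν μ_1), …, tr(ν μ_d))` is divergence free on `U`. -/
theorem kelvin_noether_local {n d : ℕ}
    (U : Set (Fin d → ℝ)) (hU : IsOpen U)
    (ξ μ : Fin d → (Fin d → ℝ) → Matrix (Fin n) (Fin n) ℝ)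
    (ν : (Fin d → ℝ) → Matrix (Fin n) (Fin n) ℝ)
    (hξ : ∀ i : Fin d, ContDiffOn ℝ (⊤ : ℕ∞) (ξ i) U)
    (hμ : ∀ i : Fin d, ContDiffOn ℝ (⊤ : ℕ∞) (μ i) U)
    (hν : ContDiffOn ℝ (⊤ : ℕ∞) ν U)
    (hadv : ∀ (i : Fin d), ∀ x ∈ U,
      fderiv ℝ ν x (Pi.single i 1) + ξ i x * ν x - ν x * ξ i x = 0)
    (hEP : ∀ x ∈ U,
      ∑ i : Fin d,
        (fderiv ℝ (μ i) x (Pi.single i 1) + ξ i x * μ i x - μ i x * ξ i x) = 0) :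
    ∀ x ∈ U,
      ∑ i : Fin d,
        fderiv ℝ (fun y => Matrix.trace (ν y * μ i y)) x (Pi.single i 1) = 0 := by
  intro x hx
  have hνd : DifferentiableAt ℝ ν x :=
    (hν.contDiffAt (hU.mem_nhds hx)).differentiableAt (by simp)
  have hμd : ∀ i, DifferentiableAt ℝ (μ i) x := fun i =>
    ((hμ i).contDiffAt (hU.mem_nhds hx)).differentiableAt (by simp)
  set A : Fin d → Matrix (Fin n) (Fin n) ℝ := fun i => fderiv ℝ ν x (Pi.single i 1) with hAdef
  set B : Fin d → Matrix (Fin n) (Fin n) ℝ := fun i => fderiv ℝ (μ i) x (Pi.single i 1) with hBdef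
  have hA : ∀ i, A i = ν x * ξ i x - ξ i x * ν x := by
    intro i
    have h := hadv i x hx
    have h1 : A i + ξ i x * ν x = ν x * ξ i x := sub_eq_zero.mp h
    exact eq_sub_of_add_eq h1
  have hB : ∑ i, B i = ∑ i, (μ i x * ξ i x - ξ i x * μ i x) := by
    have h := hEP x hx
    have h2 : ∑ i : Fin d, (B i - (μ i x * ξ i x - ξ i x * μ i x)) = 0 := by
      rw [← h]; exact Finset.sum_congr rfl fun i _ => by abel
    rw [Finset.sum_sub_distrib] at h2
    exact sub_eq_zero.mp h2
  have step1 : ∑ i : Fin d,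
      fderiv ℝ (fun y => Matrix.trace (ν y * μ i y)) x (Pi.single i 1) =
      ∑ i : Fin d, (Matrix.trace (A i * μ i x) + Matrix.trace (ν x * B i)) :=
    Finset.sum_congr rfl fun i _ => fderiv_trace_mul_aux hνd (hμd i) _
  rw [step1, Finset.sum_add_distrib]
  have h2 : ∑ i, Matrix.trace (ν x * B i) =
      ∑ i, Matrix.trace (ν x * (μ i x * ξ i x - ξ i x * μ i x)) := by
    calc ∑ i, Matrix.trace (ν x * B i) = Matrix.trace (ν x * ∑ i, B i) := by
          rw [Matrix.mul_sum, Matrix.trace_sum]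
      _ = Matrix.trace (ν x * ∑ i, (μ i x * ξ i x - ξ i x * μ i x)) := by rw [hB]
      _ = _ := by rw [Matrix.mul_sum, Matrix.trace_sum]
  rw [h2, ← Finset.sum_add_distrib]
  refine Finset.sum_eq_zero fun i _ => ?_
  rw [hA i]
  rw [Matrix.sub_mul, Matrix.mul_sub, Matrix.trace_sub, Matrix.trace_sub,
    ← Matrix.mul_assoc (ν x) (μ i x) (ξ i x), ← Matrix.mul_assoc (ν x) (ξ i x) (μ i x),
    Matrix.trace_mul_cycle (ν x) (μ i x) (ξ i x)]
  ring
end
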